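/- arXiv:1812.08992 — 4 statements merged into one kernel-verified Lean document; each statement's English description precedes it below -/
import Mathlib

section
/- Let P(∂) be an ℓ×k matrix with entries in A = ℂ[∂₁,…,∂ₙ] whose rows generate the submodule P ⊆ A^k, and suppose the ideal 𝔦_ℓ ⊆ A generated by the ℓ×ℓ minors of P(∂) is nonzero (so ℓ ≤ k). Then the A-module A^k/P is torsion-free if and only if the height of 𝔦_ℓ is at least 2 (by convention the unit ideal has height ⊤). -/
/-!
Over a UFD, a nonzero ideal has height at most one exactly when it lies in a principal prime
`(f)`, so the claim is that `R^k/P` is torsion-free iff no prime element divides all maximal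
minors of `M`. If a prime `f` divides all of them, pick a maximal minor `B` whose determinant
`f^t u` (with `f ∤ u`) has the least `f`-adic valuation `t`. By Cramer's rule the rows of
`adj B * M` lie in `P` and all their entries are minors, hence divisible by `f^t`;
torsion-freeness would give `f^t • (C * M) = adj B * M`, and restricting to the columns of `B`
yields `C * B = u • 1`, so `f ∣ det B ∣ u^ℓ`, a contradiction. Conversely, if `p • v = a ᵥ* M`,
multiplying by the adjugates of the maximal minors shows `p ∣ det B * aᵢ` for every maximal
minor `B`; since the minors have no common prime factor, `p ∣ aᵢ`, and `v = (a / p) ᵥ* M`.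
-/

noncomputable section

/-- The height of an ideal `I`: the infimum of the heights of the prime ideals minimal
over `I` (so the unit ideal, having no minimal primes, has height `⊤`). -/
noncomputable def idealHeight {R : Type*} [CommRing R] (I : Ideal R) : ℕ∞ :=
  ⨅ p : {q : PrimeSpectrum R // q.asIdeal ∈ I.minimalPrimes}, Order.height p.1

/-- The ideal generated by the `ℓ × ℓ` minors of an `ℓ × k` matrix. -/
def minorsIdeal {R : Type*} [CommRing R] {ℓ k : ℕ}
    (M : Matrix (Fin ℓ) (Fin k) R) : Ideal R :=
  Ideal.span {x | ∃ g : Fin ℓ ↪ Fin k, x = (M.submatrix id g).det}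

open Matrix Module Ideal

variable {R : Type*} [CommRing R]

lemma idealHeight_eq_height (I : Ideal R) : idealHeight I = I.height := by
  rw [idealHeight, height_eq_inf_minimalPrimes]
  apply le_antisymm
  · refine le_iInf₂ fun J hJ => ?_
    have := hJ.isPrime
    exact (iInf_le _ ⟨⟨J, this⟩, hJ⟩).trans_eq
      (PrimeSpectrum.height_eq_orderHeight ⟨J, this⟩).symm
  · refine le_iInf fun p => ?_
    rw [← PrimeSpectrum.height_eq_orderHeight]
    exact iInf₂_le _ p.2

lemma Submodule.isTorsionFree_quotient_iff [IsDomain R] {V : Type*} [AddCommGroup V] [Module R V]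
    (N : Submodule R V) :
    IsTorsionFree R (V ⧸ N) ↔ ∀ r : R, r ≠ 0 → ∀ x, r • x ∈ N → x ∈ N := by
  simp only [isTorsionFree_iff_smul_eq_zero, N.mkQ_surjective.forall, mkQ_apply,
    ← Quotient.mk_smul, Quotient.mk_eq_zero, or_iff_not_imp_left]
  exact ⟨fun h r hr x hx => h r x hx hr, fun h r x hx hr => h r hr x hx⟩

lemma mem_span_range_iff_exists_vecMul {m n : Type*} [Fintype m] {M : Matrix m n R} {v : n → R} :
    v ∈ Submodule.span R (Set.range M) ↔ ∃ c, c ᵥ* M = v := by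
  simp only [vecMul_eq_sum]
  exact Submodule.mem_span_range_iff_exists_fun R

section Minors

variable {ℓ k : ℕ} (M : Matrix (Fin ℓ) (Fin k) R)

lemma det_submatrix_mem_minorsIdeal (g : Fin ℓ → Fin k) :
    (M.submatrix id g).det ∈ minorsIdeal M := by
  by_cases hg : Function.Injective g
  · exact subset_span ⟨⟨g, hg⟩, rfl⟩
  · obtain ⟨c, c', hgc, hcc'⟩ := Function.not_injective_iff.mp hg
    rw [det_zero_of_column_eq hcc' fun r => by simp [hgc]]
    exact zero_mem _

lemma adjugate_submatrix_mul_apply_mem_minorsIdeal (g : Fin ℓ → Fin k) (i : Fin ℓ)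
    (j : Fin k) :
    ((M.submatrix id g).adjugate * M) i j ∈ minorsIdeal M := by
  have hcramer : ((M.submatrix id g).adjugate * M) i j =
      (M.submatrix id (Function.update g i j)).det := by
    rw [show ((M.submatrix id g).adjugate * M) i j =
        ((M.submatrix id g).adjugate *ᵥ Mᵀ j) i from rfl,
      ← cramer_eq_adjugate_mulVec, cramer_apply]
    congr 1
    ext r c
    rcases eq_or_ne c i with rfl | hc <;> simp [Function.update_of_ne, *]
  exact hcramer ▸ det_submatrix_mem_minorsIdeal M _

lemma minorsIdeal_le_span_singleton_iff {x : R} :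
    minorsIdeal M ≤ span {x} ↔ ∀ g : Fin ℓ ↪ Fin k, x ∣ (M.submatrix id g).det := by
  rw [minorsIdeal, span_le]
  refine ⟨fun h g => mem_span_singleton.mp (h ⟨g, rfl⟩), ?_⟩
  rintro h _ ⟨g, rfl⟩
  exact mem_span_singleton.mpr (h g)

end Minors

section UniqueFactorization

variable [IsDomain R] [UniqueFactorizationMonoid R]

lemma height_span_singleton_le_one_of_prime {f : R} (hf : Prime f) : (span {f}).height ≤ 1 := by
  have : (span {f}).IsPrime := (span_singleton_prime hf.ne_zero).mpr hf
  rw [← Nat.cast_one, height_le_iff]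
  intro q hq hlt
  rw [Nat.cast_one, Order.lt_one_iff, height_eq_zero_iff_eq_bot]
  by_contra hq0
  obtain ⟨g, hgq, hg⟩ := hq.exists_mem_prime_of_ne_bot hq0
  have hfg : span {f} = span {g} := span_singleton_eq_span_singleton.mpr
    (hf.associated_of_dvd hg (mem_span_singleton.mp (hlt.le hgq)))
  exact hlt.not_ge (hfg ▸ (span_singleton_le_iff_mem q).mpr hgq)

lemma exists_prime_eq_span_of_height_le_one {p : Ideal R} [p.IsPrime] (hp : p ≠ ⊥)
    (h : p.height ≤ 1) : ∃ f : R, Prime f ∧ p = span {f} := by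
  obtain ⟨f, hfp, hf⟩ := IsPrime.exists_mem_prime_of_ne_bot ‹_› hp
  have h1 : p.height = 1 :=
    le_antisymm h (Order.one_le_iff_ne_zero.mpr (height_eq_zero_iff_eq_bot.not.mpr hp))
  exact ⟨f, hf, eq_span_singleton_of_height_eq_one h1 hfp hf⟩

lemma height_le_one_iff_exists_prime_le_span {I : Ideal R} (hI : I ≠ ⊥) :
    I.height ≤ 1 ↔ ∃ f : R, Prime f ∧ I ≤ span {f} := by
  refine ⟨fun h => ?_, fun ⟨f, hf, hle⟩ =>
    (height_mono hle).trans (height_span_singleton_le_one_of_prime hf)⟩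
  obtain ⟨n, hn⟩ := ENat.ne_top_iff_exists.mp (h.trans_lt ENat.one_lt_top).ne
  obtain ⟨p, hp, hIp, hpn⟩ := exists_isPrime_height_eq hn.symm
  obtain ⟨f, hf, rfl⟩ :=
    exists_prime_eq_span_of_height_le_one (ne_bot_of_le_ne_bot hI hIp) (hpn.trans hn ▸ h)
  exact ⟨f, hf, hIp⟩

lemma dvd_of_forall_dvd_mul {ι : Type*} {d : ι → R}
    (hd : ∀ f : R, Prime f → ∃ i, ¬ f ∣ d i) {p a : R} (hp : p ≠ 0)
    (h : ∀ i, p ∣ d i * a) : p ∣ a := by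
  induction p using UniqueFactorizationMonoid.induction_on_prime generalizing a with
  | h₁ => exact (hp rfl).elim
  | h₂ p hunit => exact hunit.dvd
  | h₃ p q hp0 hq ih =>
    obtain ⟨i, hi⟩ := hd q hq
    obtain ⟨b, rfl⟩ := (hq.dvd_or_dvd (dvd_of_mul_right_dvd (h i))).resolve_left hi
    refine mul_dvd_mul_left q (ih hp0 fun j => ?_)
    have := h j
    rwa [mul_left_comm, mul_dvd_mul_iff_left hq.ne_zero] at this

end UniqueFactorization

lemma exists_pow_dvd_forall_and_not_pow_succ_dvd [IsDomain R] [WfDvdMonoid R] {ι : Type*}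
    {d : ι → R} {f : R} (hf : ¬ IsUnit f) {i₁ : ι} (hi₁ : d i₁ ≠ 0) :
    ∃ (t : ℕ) (i₀ : ι), (∀ i, f ^ t ∣ d i) ∧ ¬ f ^ (t + 1) ∣ d i₀ := by
  classical
  have hex : ∃ t, ∃ i, ¬ f ^ (t + 1) ∣ d i :=
    (FiniteMultiplicity.of_not_isUnit hf hi₁).imp fun _ h => ⟨i₁, h⟩
  refine ⟨Nat.find hex, (Nat.find_spec hex).choose, fun i => ?_,
    (Nat.find_spec hex).choose_spec⟩
  rcases h : Nat.find hex with _ | s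
  · simp
  · exact not_exists_not.mp (Nat.find_min hex (h.symm ▸ s.lt_succ_self : s < Nat.find hex)) i

section RowSpan

variable [IsDomain R] {ℓ k : ℕ} (M : Matrix (Fin ℓ) (Fin k) R)

theorem not_minorsIdeal_le_span_of_isTorsionFree [WfDvdMonoid R]
    [IsTorsionFree R ((Fin k → R) ⧸ Submodule.span R (Set.range M))]
    (hM : minorsIdeal M ≠ ⊥) {f : R} (hf : Prime f) : ¬ minorsIdeal M ≤ span {f} := by
  intro hle
  have hsat := (Submodule.isTorsionFree_quotient_iff _).mp ‹_›
  obtain ⟨g₁, hg₁⟩ : ∃ g : Fin ℓ ↪ Fin k, (M.submatrix id g).det ≠ 0 := by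
    by_contra! h
    exact hM (span_eq_bot.mpr fun _ ⟨g, hx⟩ => hx ▸ h g)
  obtain ⟨t, g₀, hdvd, hnot⟩ := exists_pow_dvd_forall_and_not_pow_succ_dvd
    (d := fun g : Fin ℓ ↪ Fin k => (M.submatrix id g).det) hf.not_isUnit hg₁
  set B := M.submatrix id g₀
  obtain ⟨u, hu⟩ := hdvd g₀
  have hfu : ¬ f ∣ u := fun ⟨w, hw⟩ => hnot ⟨w, by rw [hu, hw, pow_succ, mul_assoc]⟩
  have hft : f ^ t ≠ 0 := pow_ne_zero t hf.ne_zero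
  have hrows : ∀ i, ∃ c : Fin ℓ → R, f ^ t • (c ᵥ* M) = (B.adjugate * M) i := by
    intro i
    have hentry (j : Fin k) : f ^ t ∣ (B.adjugate * M) i j :=
      mem_span_singleton.mp <| (minorsIdeal_le_span_singleton_iff M).mpr hdvd
        (adjugate_submatrix_mul_apply_mem_minorsIdeal M g₀ i j)
    choose w hw using hentry
    have hw' : f ^ t • w = (B.adjugate * M) i := funext fun j => (hw j).symm
    obtain ⟨c, rfl⟩ := mem_span_range_iff_exists_vecMul.mp <|
      hsat _ hft w (hw' ▸ mem_span_range_iff_exists_vecMul.mpr ⟨B.adjugate i, rfl⟩)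
    exact ⟨c, hw'⟩
  choose C hC using hrows
  change Matrix (Fin ℓ) (Fin ℓ) R at C
  have hCB : C * B = u • 1 := by
    refine smul_right_injective _ hft ?_
    calc f ^ t • (C * B) = (f ^ t • (C * M)).submatrix id g₀ := rfl
      _ = B.adjugate * B := by ext i c; exact congrFun (hC i) (g₀ c)
      _ = f ^ t • u • 1 := by rw [adjugate_mul, hu, mul_smul]
  have hdet : C.det * B.det = u ^ ℓ := by
    simpa [det_mul] using congrArg det hCB
  exact hfu (hf.dvd_of_dvd_pow (hdet ▸ dvd_mul_of_dvd_right
    ((minorsIdeal_le_span_singleton_iff M).mp hle g₀) _))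

theorem isTorsionFree_of_forall_prime_not_minorsIdeal_le [UniqueFactorizationMonoid R]
    (h : ∀ f : R, Prime f → ¬ minorsIdeal M ≤ span {f}) :
    IsTorsionFree R ((Fin k → R) ⧸ Submodule.span R (Set.range M)) := by
  refine (Submodule.isTorsionFree_quotient_iff _).mpr fun p hp v hv => ?_
  obtain ⟨a, ha⟩ := mem_span_range_iff_exists_vecMul.mp hv
  have hdvd (i : Fin ℓ) (g : Fin ℓ ↪ Fin k) : p ∣ (M.submatrix id g).det * a i := by
    refine ⟨((v ∘ g) ᵥ* (M.submatrix id g).adjugate) i, ?_⟩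
    have hg : a ᵥ* M.submatrix id g = p • (v ∘ g) := funext fun c => congrFun ha (g c)
    have := congrFun (congrArg (· ᵥ* (M.submatrix id g).adjugate) hg) i
    simpa [vecMul_vecMul, mul_adjugate, vecMul_smul, smul_vecMul] using this
  have hpa (i : Fin ℓ) : p ∣ a i := by
    refine dvd_of_forall_dvd_mul (fun f hf => ?_) hp (hdvd i)
    simpa [minorsIdeal_le_span_singleton_iff] using h f hf
  choose e he using hpa
  refine mem_span_range_iff_exists_vecMul.mpr ⟨e, smul_right_injective _ hp ?_⟩
  change p • (e ᵥ* M) = p • v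
  rw [← smul_vecMul, ← ha]
  exact congrArg (· ᵥ* M) (funext fun i => (he i).symm)

end RowSpan

theorem isTorsionFree_quotient_span_range_iff_two_le_height [IsDomain R]
    [UniqueFactorizationMonoid R] {ℓ k : ℕ} (M : Matrix (Fin ℓ) (Fin k) R)
    (hM : minorsIdeal M ≠ ⊥) :
    IsTorsionFree R ((Fin k → R) ⧸ Submodule.span R (Set.range M)) ↔
      2 ≤ (minorsIdeal M).height := by
  rw [← one_add_one_eq_two, ENat.add_one_le_iff ENat.one_ne_top, ← not_le,
    height_le_one_iff_exists_prime_le_span hM, not_exists]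
  simp only [not_and]
  exact ⟨fun _ _ => not_minorsIdeal_le_span_of_isTorsionFree M hM,
    isTorsionFree_of_forall_prime_not_minorsIdeal_le M⟩

theorem torsionFree_iff_minors_height_general (n k ℓ : ℕ)
    (M : Matrix (Fin ℓ) (Fin k) (MvPolynomial (Fin n) ℂ))
    (hM : minorsIdeal M ≠ ⊥) :
    (∀ p : MvPolynomial (Fin n) ℂ, p ≠ 0 →
        ∀ m : (Fin k → MvPolynomial (Fin n) ℂ) ⧸
            Submodule.span (MvPolynomial (Fin n) ℂ) (Set.range fun i j => M i j),
          p • m = 0 → m = 0) ↔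
      2 ≤ idealHeight (minorsIdeal M) := by
  rw [idealHeight_eq_height, ← isTorsionFree_quotient_span_range_iff_two_le_height M hM,
    isTorsionFree_iff_smul_eq_zero]
  exact ⟨fun h p m hm => or_iff_not_imp_left.mpr fun hp => h p hp m hm,
    fun h p hp m hm => (h p m hm).resolve_left hp⟩

/-- Suppose the ideal `𝔦_ℓ` of `ℓ × ℓ` minors of the `ℓ × k` matrix `M = P(∂)` over
`A = ℂ[∂₁, …, ∂ₙ]` is nonzero (so `ℓ ≤ k`), and let `P ⊆ A^k` be the submodule generated by
the rows of `M`.  Then `A^k/P` is torsion-free if and only if the height of `𝔦_ℓ` is at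
least `2`. -/
theorem torsionFree_iff_minors_height (n k ℓ : ℕ) (hn : 0 < n) (hk : 0 < k) (hl : 0 < ℓ)
    (hlk : ℓ ≤ k)
    (M : Matrix (Fin ℓ) (Fin k) (MvPolynomial (Fin n) ℂ))
    (hM : minorsIdeal M ≠ ⊥) :
    (∀ p : MvPolynomial (Fin n) ℂ, p ≠ 0 →
        ∀ m : (Fin k → MvPolynomial (Fin n) ℂ) ⧸
            Submodule.span (MvPolynomial (Fin n) ℂ) (Set.range fun i j => M i j),
          p • m = 0 → m = 0) ↔
      2 ≤ idealHeight (minorsIdeal M) :=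
  torsionFree_iff_minors_height_general n k ℓ M hM
end
end

section
/- Suppose ℓ < k. For every d ≥ 0, the set of matrices P(∂) in M_{ℓ,k}(d) for which the A-module A^k/P is torsion-free contains a nonempty Zariski-open subset of M_{ℓ,k}(d); that is, there exists a nonzero polynomial F in N = ℓ·k·(n+d choose n) variables such that for every ℓ×k matrix of degree at most d whose coefficient vector is not a zero of F, the quotient of A^k by the submodule P generated by its rows is torsion-free. -/
/-!
If two maximal minors `Δ₁`, `Δ₂` of `P` have no common factor, then `A^k/P` is torsion-free:
from `p • x = a ᵥ* P`, Cramer's rule gives `p ∣ Δ₁ * aᵢ` and `p ∣ Δ₂ * aᵢ`, hence `p ∣ aᵢ`, so `x`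
already lies in `P`.

Coprimality of `Δ₁` and `Δ₂` is enforced by one polynomial condition on the coefficients of `P`.
The Kronecker substitution `Xⱼ ↦ X ^ b ^ j`, with `b` larger than the degrees of the minors, is
injective on polynomials of degree `< b`, so a nonunit common factor of `Δ₁` and `Δ₂` would give a
nonunit common factor of their univariate images, which is excluded once the resultant of these
images does not vanish. That resultant is a polynomial `F` in the coefficients of `P`, and
`F ≠ 0` because it takes the value `1` at a staircase matrix whose two minors are
`(X_{n-1} ^ d) ^ ℓ` and `1`.
-/

noncomputable section

/-- The coefficient of the monomial `m` (of degree at most `d`) in the `(i, j)` entry of the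
matrix `M`: the coordinates of `M ∈ M_{ℓ,k}(d)` under the identification of `M_{ℓ,k}(d)` with
the affine space `ℂ^N`, `N = ℓ·k·(n+d choose n)`. -/
def matrixCoeffs {n ℓ k d : ℕ} (M : Matrix (Fin ℓ) (Fin k) (MvPolynomial (Fin n) ℂ)) :
    Fin ℓ × Fin k × {m : Fin n →₀ ℕ // m.degree ≤ d} → ℂ :=
  fun v => MvPolynomial.coeff v.2.2.1 (M v.1 v.2.1)

theorem Nat.sum_mul_pow_injOn (b : ℕ) {N : ℕ} :
    Set.InjOn (fun f : Fin N → ℕ => ∑ j, f j * b ^ (j : ℕ)) {f | ∀ j, f j < b} := by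
  induction N with
  | zero => exact fun f _ g _ _ => funext fun j => j.elim0
  | succ N ih =>
    intro f hf g hg h
    have split : ∀ f : Fin (N + 1) → ℕ,
        ∑ j, f j * b ^ (j : ℕ) = f 0 + (∑ j : Fin N, f j.succ * b ^ (j : ℕ)) * b := by
      intro f
      simp [Fin.sum_univ_succ, pow_succ, ← mul_assoc, Finset.sum_mul]
    simp only [split] at h
    have h0 : f 0 = g 0 := by
      simpa [Nat.add_mul_mod_self_right, Nat.mod_eq_of_lt (hf 0), Nat.mod_eq_of_lt (hg 0)]
        using congrArg (· % b) h
    have htail := ih (fun j => hf j.succ) (fun j => hg j.succ)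
      (Nat.eq_of_mul_eq_mul_right (hf 0).pos (by simp only at h ⊢; omega))
    exact funext (Fin.cases h0 (congrFun htail))

namespace MvPolynomial

variable {R : Type*} [CommSemiring R] {n b : ℕ}

def kroneckerExponent (b : ℕ) (m : Fin n →₀ ℕ) : ℕ := ∑ j, m j * b ^ (j : ℕ)

theorem kroneckerExponent_injOn (b : ℕ) :
    Set.InjOn (kroneckerExponent (n := n) b) {m | ∀ j, m j < b} :=
  fun _ hm _ hm' h => DFunLike.coe_injective (Nat.sum_mul_pow_injOn b hm hm' h)

theorem kroneckerExponent_le (hb : 0 < b) (m : Fin n →₀ ℕ) :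
    kroneckerExponent b m ≤ m.degree * b ^ (n - 1) := by
  rw [kroneckerExponent, Finsupp.degree_eq_sum, Finset.sum_mul]
  gcongr with j
  omega

variable (R) in
def kroneckerSubst (b : ℕ) : MvPolynomial (Fin n) R →ₐ[R] Polynomial R :=
  aeval fun j => Polynomial.X ^ b ^ (j : ℕ)

theorem kroneckerSubst_X (j : Fin n) :
    kroneckerSubst R b (X j) = Polynomial.X ^ b ^ (j : ℕ) :=
  aeval_X _ j

theorem kroneckerSubst_monomial (m : Fin n →₀ ℕ) (r : R) :
    kroneckerSubst R b (monomial m r) = Polynomial.monomial (kroneckerExponent b m) r := by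
  simp [kroneckerSubst, aeval_monomial, Finsupp.prod_fintype, ← pow_mul, Finset.prod_pow_eq_pow_sum,
    kroneckerExponent, mul_comm, Polynomial.C_mul_X_pow_eq_monomial]

theorem kroneckerSubst_eq_sum (p : MvPolynomial (Fin n) R) :
    kroneckerSubst R b p =
      ∑ m ∈ p.support, Polynomial.monomial (kroneckerExponent b m) (coeff m p) := by
  nth_rewrite 1 [p.as_sum]
  simp only [map_sum, kroneckerSubst_monomial]

theorem natDegree_kroneckerSubst_le (hb : 0 < b) (p : MvPolynomial (Fin n) R) :
    (kroneckerSubst R b p).natDegree ≤ p.totalDegree * b ^ (n - 1) := by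
  rw [kroneckerSubst_eq_sum]
  refine Polynomial.natDegree_sum_le_of_forall_le _ _ fun m hm => ?_
  refine (Polynomial.natDegree_monomial_le _).trans ((kroneckerExponent_le hb m).trans ?_)
  gcongr
  exact le_totalDegree hm

theorem exponent_lt_of_totalDegree_lt {p : MvPolynomial (Fin n) R} (hp : p.totalDegree < b)
    {m : Fin n →₀ ℕ} (hm : m ∈ p.support) (j : Fin n) : m j < b :=
  ((m.le_degree j).trans (le_totalDegree hm)).trans_lt hp

theorem coeff_kroneckerSubst {p : MvPolynomial (Fin n) R} (hp : p.totalDegree < b)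
    {m : Fin n →₀ ℕ} (hm : ∀ j, m j < b) :
    (kroneckerSubst R b p).coeff (kroneckerExponent b m) = coeff m p := by
  rw [kroneckerSubst_eq_sum, Polynomial.finsetSum_coeff]
  simp_rw [Polynomial.coeff_monomial]
  rw [Finset.sum_eq_single m]
  · simp
  · intro m' hm' hne
    rw [if_neg fun h => hne (kroneckerExponent_injOn b (exponent_lt_of_totalDegree_lt hp hm') hm h)]
  · intro hm
    simp [notMem_support_iff.mp hm]

theorem kroneckerSubst_injOn (b : ℕ) :
    Set.InjOn (kroneckerSubst R (n := n) b) {p | p.totalDegree < b} := by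
  intro p hp q hq h
  ext m
  by_cases hm : ∀ j, m j < b
  · rw [← coeff_kroneckerSubst hp hm, ← coeff_kroneckerSubst hq hm, h]
  · push Not at hm
    obtain ⟨j, hj⟩ := hm
    rw [notMem_support_iff.mp fun h => (exponent_lt_of_totalDegree_lt hp h j).not_ge hj,
      notMem_support_iff.mp fun h => (exponent_lt_of_totalDegree_lt hq h j).not_ge hj]

theorem isUnit_of_isUnit_kroneckerSubst [IsDomain R] {p : MvPolynomial (Fin n) R}
    (hp : p.totalDegree < b) (h : IsUnit (kroneckerSubst R b p)) : IsUnit p := by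
  obtain ⟨r, hr, hrp⟩ := Polynomial.isUnit_iff.mp h
  have hC : kroneckerSubst R b (C r : MvPolynomial (Fin n) R) = Polynomial.C r := aeval_C _ r
  rw [kroneckerSubst_injOn b hp ((totalDegree_C r).trans_lt (Nat.zero_lt_of_lt hp))
    (hrp.symm.trans hC.symm)]
  exact hr.map C

theorem isRelPrime_of_isCoprime_kroneckerSubst [IsDomain R] {p q : MvPolynomial (Fin n) R}
    (hp : p.totalDegree < b) (hq : q.totalDegree < b)
    (h : IsCoprime (kroneckerSubst R b p) (kroneckerSubst R b q)) : IsRelPrime p q := by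
  intro r hrp hrq
  have hr : r.totalDegree < b := by
    by_cases hp0 : p = 0
    · have hq0 : q ≠ 0 := by rintro rfl; simp [hp0, not_isCoprime_zero_zero] at h
      exact (totalDegree_le_of_dvd_of_isDomain hrq hq0).trans_lt hq
    · exact (totalDegree_le_of_dvd_of_isDomain hrp hp0).trans_lt hp
  exact isUnit_of_isUnit_kroneckerSubst hr (h.isUnit_of_dvd' (map_dvd _ hrp) (map_dvd _ hrq))

theorem map_kroneckerSubst {S : Type*} [CommSemiring S] (f : R →+* S) (p : MvPolynomial (Fin n) R) :
    (kroneckerSubst R b p).map f = kroneckerSubst S b (map f p) := by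
  rw [← Polynomial.coe_mapRingHom, kroneckerSubst, kroneckerSubst, map_aeval, aeval_def, eval₂_map]
  simp [Polynomial.algebraMap_eq, Polynomial.mapRingHom_comp_C]

end MvPolynomial

open Polynomial in
theorem Polynomial.isCoprime_of_resultant_ne_zero {K : Type*} [Field K] {f g : K[X]} {m n : ℕ}
    (hf : f.natDegree ≤ m) (hg : g.natDegree ≤ n) (hmn : m ≠ 0 ∨ n ≠ 0)
    (h : f.resultant g m n ≠ 0) : IsCoprime f g := by
  obtain ⟨p, q, -, -, e⟩ := exists_mul_add_mul_eq_C_resultant f g hf hg hmn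
  have hC : C (f.resultant g m n)⁻¹ * C (f.resultant g m n) = 1 := by
    rw [← C_mul, inv_mul_cancel₀ h, C_1]
  exact ⟨C (f.resultant g m n)⁻¹ * p, C (f.resultant g m n)⁻¹ * q, by
    linear_combination C (f.resultant g m n)⁻¹ * e + hC⟩

theorem IsRelPrime.dvd_of_dvd_mul_of_dvd_mul {R : Type*} [CommMonoidWithZero R]
    [UniqueFactorizationMonoid R] {x y p a : R} (h : IsRelPrime x y)
    (hx : p ∣ x * a) (hy : p ∣ y * a) : p ∣ a := by
  obtain rfl | ha := eq_or_ne a 0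
  · exact dvd_zero p
  obtain ⟨a', p', s, hrel, rfl, rfl⟩ := UniqueFactorizationMonoid.exists_reduced_factors a ha p
  have hs : s ≠ 0 := left_ne_zero_of_mul ha
  have cancel : ∀ z, s * p' ∣ z * (s * a') → p' ∣ z := fun z hz =>
    hrel.symm.dvd_of_dvd_mul_right <| (mul_dvd_mul_iff_left hs).mp <| by
      rwa [mul_left_comm] at hz
  exact mul_dvd_mul_left s (h (cancel x hx) (cancel y hy)).dvd

namespace Matrix

theorem dvd_det_mul_of_vecMul_eq_smul {R ι : Type*} [CommRing R] [Fintype ι]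
    [DecidableEq ι] {N : Matrix ι ι R} {a y : ι → R} {p : R} (h : a ᵥ* N = p • y) (i : ι) :
    p ∣ N.det * a i := by
  have hadj : N.det • a = p • (y ᵥ* N.adjugate) := by
    rw [← smul_vecMul, ← h, vecMul_vecMul, mul_adjugate, vecMul_smul, vecMul_one]
  exact ⟨(y ᵥ* N.adjugate) i, by simpa using congrFun hadj i⟩

theorem isTorsionFree_quotient_span_rows_of_isRelPrime_det {R ι κ : Type*} [CommRing R]
    [IsDomain R] [UniqueFactorizationMonoid R] [Fintype ι] [DecidableEq ι] (M : Matrix ι κ R)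
    {S₁ S₂ : ι → κ} (h : IsRelPrime (M.submatrix id S₁).det (M.submatrix id S₂).det) :
    Module.IsTorsionFree R ((κ → R) ⧸ Submodule.span R (Set.range M)) := by
  refine .of_smul_eq_zero fun p m hpm => or_iff_not_imp_left.mpr fun hp => ?_
  obtain ⟨x, rfl⟩ := Submodule.Quotient.mk_surjective _ m
  rw [← Submodule.Quotient.mk_smul, Submodule.Quotient.mk_eq_zero] at hpm
  rw [Submodule.Quotient.mk_eq_zero]
  obtain ⟨a, ha⟩ := (Submodule.mem_span_range_iff_exists_fun R).mp hpm
  rw [← vecMul_eq_sum] at ha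
  have hminor (S : ι → κ) : a ᵥ* M.submatrix id S = p • (x ∘ S) := by
    ext j
    exact congrFun ha (S j)
  have hdvd (i : ι) : p ∣ a i :=
    h.dvd_of_dvd_mul_of_dvd_mul (dvd_det_mul_of_vecMul_eq_smul (hminor S₁) i)
      (dvd_det_mul_of_vecMul_eq_smul (hminor S₂) i)
  choose c hc using hdvd
  refine (Submodule.mem_span_range_iff_exists_fun R).mpr ⟨c, ?_⟩
  rw [← vecMul_eq_sum]
  apply smul_right_injective _ hp
  have hpc : p • c = a := funext fun i => (hc i).symm
  simp only [← smul_vecMul, hpc, ha]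

end Matrix

theorem MvPolynomial.totalDegree_det_le {R σ ι : Type*} [CommRing R] [Fintype ι] [DecidableEq ι]
    {N : Matrix ι ι (MvPolynomial σ R)} {d : ℕ} (h : ∀ i j, (N i j).totalDegree ≤ d) :
    N.det.totalDegree ≤ Fintype.card ι * d := by
  rw [Matrix.det_apply']
  refine (totalDegree_finsetSum _ _).trans (Finset.sup_le fun π _ => ?_)
  refine (totalDegree_mul _ _).trans ?_
  rw [← map_intCast (C : R →+* MvPolynomial σ R), totalDegree_C, zero_add]
  refine (totalDegree_finsetProd _ _).trans ?_
  simpa using Finset.sum_le_sum fun i (_ : i ∈ Finset.univ) => h (π i) i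

namespace Matrix

open MvPolynomial Polynomial

variable {R ι κ : Type*} [Fintype ι] [DecidableEq ι] {n : ℕ}

/-- The sizes `D` and `D + 1` (rather than `D` and `D`) keep the Sylvester matrix nonempty when
`D = 0`. -/
def minorResultant [CommRing R] (b D : ℕ) (S₁ S₂ : ι → κ)
    (M : Matrix ι κ (MvPolynomial (Fin n) R)) : R :=
  resultant (kroneckerSubst R b (M.submatrix id S₁).det)
    (kroneckerSubst R b (M.submatrix id S₂).det) D (D + 1)

theorem map_minorResultant [CommRing R] {S : Type*} [CommRing S] (f : R →+* S) (b D : ℕ)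
    (S₁ S₂ : ι → κ) (M : Matrix ι κ (MvPolynomial (Fin n) R)) :
    f (minorResultant b D S₁ S₂ M) = minorResultant b D S₁ S₂ (M.map (MvPolynomial.map f)) := by
  rw [minorResultant, ← resultant_map_map, map_kroneckerSubst, map_kroneckerSubst,
    RingHom.map_det, RingHom.map_det]
  rfl

theorem isRelPrime_det_of_minorResultant_ne_zero [Field R] {b D d : ℕ} {S₁ S₂ : ι → κ}
    {M : Matrix ι κ (MvPolynomial (Fin n) R)} (hM : ∀ i j, (M i j).totalDegree ≤ d)
    (hb : Fintype.card ι * d < b) (hD : Fintype.card ι * d * b ^ (n - 1) ≤ D)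
    (h : minorResultant b D S₁ S₂ M ≠ 0) :
    IsRelPrime (M.submatrix id S₁).det (M.submatrix id S₂).det := by
  have hdet (S : ι → κ) : (M.submatrix id S).det.totalDegree ≤ Fintype.card ι * d :=
    totalDegree_det_le fun i j => hM i (S j)
  have hnat (S : ι → κ) : (kroneckerSubst R b (M.submatrix id S).det).natDegree ≤ D :=
    (natDegree_kroneckerSubst_le (Nat.zero_lt_of_lt hb) _).trans
      ((Nat.mul_le_mul_right _ (hdet S)).trans hD)
  exact isRelPrime_of_isCoprime_kroneckerSubst ((hdet S₁).trans_lt hb) ((hdet S₂).trans_lt hb) <|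
    isCoprime_of_resultant_ne_zero (hnat S₁) ((hnat S₂).trans D.le_succ)
      (Or.inr D.succ_ne_zero) h

end Matrix

open MvPolynomial Matrix

instance {σ : Type*} [Finite σ] (d : ℕ) : Fintype {m : σ →₀ ℕ // m.degree ≤ d} :=
  (Finsupp.finite_of_degree_le d).fintype

def MvPolynomial.genericMatrix (R : Type*) [CommSemiring R] (σ ι κ : Type*) [Finite σ] (d : ℕ) :
    Matrix ι κ (MvPolynomial σ (MvPolynomial (ι × κ × {m : σ →₀ ℕ // m.degree ≤ d}) R)) :=
  Matrix.of fun i j => ∑ m, monomial m.1 (X (i, j, m))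

theorem genericMatrix_map_eval_matrixCoeffs {n ℓ k d : ℕ}
    {M : Matrix (Fin ℓ) (Fin k) (MvPolynomial (Fin n) ℂ)} (hM : ∀ i j, (M i j).totalDegree ≤ d) :
    (genericMatrix ℂ (Fin n) (Fin ℓ) (Fin k) d).map (map (eval (matrixCoeffs M))) = M := by
  ext i j : 1
  simp only [genericMatrix, map_apply, of_apply, map_sum, map_monomial, eval_X, matrixCoeffs]
  have hsupp : (M i j).support ⊆ (Finsupp.finite_of_degree_le d).toFinset := fun m hm =>
    (Finsupp.finite_of_degree_le d).mem_toFinset.mpr ((le_totalDegree hm).trans (hM i j))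
  calc ∑ m : {m : Fin n →₀ ℕ // m.degree ≤ d}, monomial m.1 (coeff m.1 (M i j))
      = ∑ m ∈ (Finsupp.finite_of_degree_le d).toFinset, monomial m (coeff m (M i j)) :=
        (Finset.sum_subtype (p := fun m : Fin n →₀ ℕ => m.degree ≤ d) _
          (fun _ => (Finsupp.finite_of_degree_le d).mem_toFinset)
          (fun m => monomial m (coeff m (M i j)))).symm
    _ = ∑ m ∈ (M i j).support, monomial m (coeff m (M i j)) :=
        (Finset.sum_subset hsupp fun m _ hm => by rw [notMem_support_iff.mp hm, map_zero]).symm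
    _ = M i j := (as_sum _).symm

theorem eval_minorResultant_genericMatrix {n ℓ k d b D : ℕ} {S₁ S₂ : Fin ℓ → Fin k}
    {M : Matrix (Fin ℓ) (Fin k) (MvPolynomial (Fin n) ℂ)} (hM : ∀ i j, (M i j).totalDegree ≤ d) :
    eval (matrixCoeffs M) (minorResultant b D S₁ S₂ (genericMatrix ℂ (Fin n) (Fin ℓ) (Fin k) d)) =
      minorResultant b D S₁ S₂ M := by
  rw [map_minorResultant, genericMatrix_map_eval_matrixCoeffs hM]

section Staircase

variable (R : Type*) [CommRing R] {σ : Type*} (v : σ) (d : ℕ) {ℓ k : ℕ} (hlk : ℓ < k)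

def staircaseMatrix : Matrix (Fin ℓ) (Fin k) (MvPolynomial σ R) :=
  Matrix.of fun i j =>
    if j = Fin.castLE hlk.le i then X v ^ d else if j = Fin.castLE hlk i.succ then 1 else 0

theorem totalDegree_staircaseMatrix_le [Nontrivial R] (i : Fin ℓ) (j : Fin k) :
    (staircaseMatrix R v d hlk i j).totalDegree ≤ d := by
  simp only [staircaseMatrix, of_apply]
  split_ifs <;> simp

theorem det_staircaseMatrix_castLE :
    ((staircaseMatrix R v d hlk).submatrix id (Fin.castLE hlk.le)).det = (X v ^ d) ^ ℓ := by
  rw [det_of_isUpperTriangular]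
  · simp [staircaseMatrix]
  · intro i j (hij : j < i)
    simp only [staircaseMatrix, submatrix_apply, id, of_apply, Fin.ext_iff, Fin.val_castLE,
      Fin.val_succ]
    rw [if_neg (by omega), if_neg (by omega)]

theorem det_staircaseMatrix_succ :
    ((staircaseMatrix R v d hlk).submatrix id (Fin.castLE hlk ∘ Fin.succ)).det = 1 := by
  rw [det_of_isLowerTriangular]
  · simp [staircaseMatrix, Fin.ext_iff]
  · intro i j (hij : i < j)
    simp only [staircaseMatrix, submatrix_apply, id, of_apply, Function.comp_apply, Fin.ext_iff,
      Fin.val_castLE, Fin.val_succ]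
    rw [if_neg (by omega), if_neg (by omega)]

theorem minorResultant_staircaseMatrix {n : ℕ} (hn : 0 < n) :
    minorResultant (ℓ * d + 1) (ℓ * d * (ℓ * d + 1) ^ (n - 1)) (Fin.castLE hlk.le)
      (Fin.castLE hlk ∘ Fin.succ) (staircaseMatrix R (⟨n - 1, by omega⟩ : Fin n) d hlk) = 1 := by
  rw [minorResultant, det_staircaseMatrix_castLE, det_staircaseMatrix_succ, map_one, map_pow,
    map_pow, kroneckerSubst_X, ← pow_mul, ← pow_mul,
    show (ℓ * d + 1) ^ (n - 1) * (d * ℓ) = ℓ * d * (ℓ * d + 1) ^ (n - 1) by ring,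
    Polynomial.resultant_X_pow_left _ _ _ (by simp), Polynomial.coeff_one_zero, one_pow]

end Staircase

theorem generic_torsionFree_general (n k ℓ d : ℕ) (hn : 0 < n) (hlk : ℓ < k) :
    ∃ F : MvPolynomial (Fin ℓ × Fin k × {m : Fin n →₀ ℕ // m.degree ≤ d}) ℂ,
      F ≠ 0 ∧
      ∀ M : Matrix (Fin ℓ) (Fin k) (MvPolynomial (Fin n) ℂ),
        (∀ i j, (M i j).totalDegree ≤ d) →
        MvPolynomial.eval (matrixCoeffs (d := d) M) F ≠ 0 →
        ∀ p : MvPolynomial (Fin n) ℂ, p ≠ 0 →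
          ∀ m : (Fin k → MvPolynomial (Fin n) ℂ) ⧸
              Submodule.span (MvPolynomial (Fin n) ℂ) (Set.range fun i j => M i j),
            p • m = 0 → m = 0 := by
  set b := ℓ * d + 1
  set D := ℓ * d * b ^ (n - 1)
  set S₁ : Fin ℓ → Fin k := Fin.castLE hlk.le
  set S₂ : Fin ℓ → Fin k := Fin.castLE hlk ∘ Fin.succ
  refine ⟨minorResultant b D S₁ S₂ (genericMatrix ℂ (Fin n) (Fin ℓ) (Fin k) d), fun hF => ?_,
    fun M hM hF p hp m hpm => ?_⟩
  · have h := eval_minorResultant_genericMatrix (S₁ := S₁) (S₂ := S₂) (b := b) (D := D)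
      (totalDegree_staircaseMatrix_le ℂ (⟨n - 1, by omega⟩ : Fin n) d hlk)
    rw [hF, map_zero, minorResultant_staircaseMatrix ℂ d hlk hn] at h
    exact zero_ne_one h
  · rw [eval_minorResultant_genericMatrix hM] at hF
    have := isTorsionFree_quotient_span_rows_of_isRelPrime_det M
      (isRelPrime_det_of_minorResultant_ne_zero hM (by simp [b]) (by simp [D]) hF)
    exact (smul_eq_zero_iff_right hp).mp hpm

/-- In the strictly underdetermined case `ℓ < k`, generically the module `A^k/P` is
torsion-free: the set of matrices in `M_{ℓ,k}(d)` whose rows generate a submodule `P ⊆ A^k`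
with `A^k/P` torsion-free contains a nonempty Zariski-open subset; i.e. there is a nonzero
polynomial `F` in the `N = ℓ·k·(n+d choose n)` coefficient variables such that for every
`ℓ × k` matrix of degree at most `d` whose coefficient vector does not annihilate `F`, the
quotient `A^k/P` is torsion-free. -/
theorem generic_torsionFree (n k ℓ d : ℕ) (hn : 0 < n) (hl : 0 < ℓ) (hlk : ℓ < k) :
    ∃ F : MvPolynomial (Fin ℓ × Fin k × {m : Fin n →₀ ℕ // m.degree ≤ d}) ℂ,
      F ≠ 0 ∧
      ∀ M : Matrix (Fin ℓ) (Fin k) (MvPolynomial (Fin n) ℂ),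
        (∀ i j, (M i j).totalDegree ≤ d) →
        MvPolynomial.eval (matrixCoeffs (d := d) M) F ≠ 0 →
        ∀ p : MvPolynomial (Fin n) ℂ, p ≠ 0 →
          ∀ m : (Fin k → MvPolynomial (Fin n) ℂ) ⧸
              Submodule.span (MvPolynomial (Fin n) ℂ) (Set.range fun i j => M i j),
            p • m = 0 → m = 0 :=
  generic_torsionFree_general n k ℓ d hn hlk
end
end

section
/- The B-module ℂ^{ℤⁿ} of all functions w : ℤⁿ → ℂ, with B = ℂ[σ₁,σ₁⁻¹,…,σₙ,σₙ⁻¹] acting by shifts, is an injective B-module: for every injective B-module homomorphism ι : M → M' and every B-module homomorphism φ : M → ℂ^{ℤⁿ}, there exists a B-module homomorphism ψ : M' → ℂ^{ℤⁿ} with ψ ∘ ι = φ. -/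
noncomputable section

/-- The Laurent polynomial ring `B = ℂ[σ₁, σ₁⁻¹, …, σₙ, σₙ⁻¹]`,
realized as the group algebra of `ℤⁿ` over `ℂ`. -/
abbrev LaurentB (n : ℕ) := AddMonoidAlgebra ℂ (Fin n → ℤ)

/-- The shift action of `ℤⁿ` on the space `ℂ^{ℤⁿ}` of functions `ℤⁿ → ℂ`,
as a monoid homomorphism into the `ℂ`-linear endomorphisms:
`(σ_μ w)(m) = w(m + μ)`. -/
def shiftEnd (n : ℕ) : Multiplicative (Fin n → ℤ) →* Module.End ℂ ((Fin n → ℤ) → ℂ) where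
  toFun μ :=
    { toFun := fun w m => w (m + Multiplicative.toAdd μ)
      map_add' := fun w v => rfl
      map_smul' := fun c w => rfl }
  map_one' := by
    apply LinearMap.ext; intro w; funext m
    simp
  map_mul' := fun μ ν => by
    apply LinearMap.ext; intro w; funext m
    exact congrArg w (add_assoc m (Multiplicative.toAdd μ) (Multiplicative.toAdd ν)).symm

/-- The action of `B` on `ℂ^{ℤⁿ}` by shifts, as a `ℂ`-algebra homomorphism into
the endomorphism algebra. -/
def shiftAlgHom (n : ℕ) :
    LaurentB n →ₐ[ℂ] Module.End ℂ ((Fin n → ℤ) → ℂ) :=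
  AddMonoidAlgebra.lift ℂ _ (Fin n → ℤ) (shiftEnd n)

/-- `ℂ^{ℤⁿ}` as a module over the Laurent polynomial ring `B`, with `B` acting by shifts. -/
instance shiftModule (n : ℕ) : Module (LaurentB n) ((Fin n → ℤ) → ℂ) :=
  Module.compHom _ (shiftAlgHom n).toRingHom

/-!
`ℂ^{ℤⁿ}` is the module coinduced from `ℂ` along `ℂ → B`: a `B`-linear map `N → ℂ^{ℤⁿ}` is
determined by the `ℂ`-linear functional "value at `0`", and every functional `g` arises, from
`x ↦ (m ↦ g (σ^m x))`. Hence extending `B`-linear maps into `ℂ^{ℤⁿ}` along an injection reduces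
to extending `ℂ`-linear functionals, which is possible over a field.
-/

open AddMonoidAlgebra

section ShiftLift

variable {n : ℕ}

theorem single_smul_shift_apply (a : Fin n → ℤ) (c : ℂ) (w : (Fin n → ℤ) → ℂ)
    (m : Fin n → ℤ) : ((single a c : LaurentB n) • w) m = c * w (m + a) := by
  show shiftAlgHom n (single a c) w m = _
  rw [shiftAlgHom, lift_single]
  rfl

instance shiftModule_isScalarTower : IsScalarTower ℂ (LaurentB n) ((Fin n → ℤ) → ℂ) :=
  IsScalarTower.of_algebraMap_smul fun c w => by
    ext m
    simp [coe_algebraMap, single_smul_shift_apply]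

variable {N N' : Type*} [AddCommGroup N] [Module (LaurentB n) N] [Module ℂ N]
  [IsScalarTower ℂ (LaurentB n) N] [AddCommGroup N'] [Module (LaurentB n) N'] [Module ℂ N']
  [IsScalarTower ℂ (LaurentB n) N']

def shiftLift (g : N →ₗ[ℂ] ℂ) : N →ₗ[LaurentB n] ((Fin n → ℤ) → ℂ) where
  toFun x m := g ((single m 1 : LaurentB n) • x)
  map_add' x y := by
    ext m
    simp only [smul_add, map_add, Pi.add_apply]
  map_smul' b x := by
    ext m
    induction b using induction_linear with
    | zero => simp
    | add b₁ b₂ h₁ h₂ => simp only [add_smul, smul_add, map_add, Pi.add_apply, h₁, h₂]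
    | single a c =>
      have hsingle : (single (m + a) c : LaurentB n) = c • single (m + a) 1 := by
        rw [smul_single', mul_one]
      rw [RingHom.id_apply, single_smul_shift_apply, smul_smul, single_mul_single, one_mul,
        hsingle, smul_assoc, map_smul, smul_eq_mul]

@[simp]
theorem shiftLift_apply (g : N →ₗ[ℂ] ℂ) (x : N) (m : Fin n → ℤ) :
    shiftLift g x m = g ((single m 1 : LaurentB n) • x) :=
  rfl

theorem shiftLift_comp (g : N' →ₗ[ℂ] ℂ) (ι : N →ₗ[LaurentB n] N') :
    shiftLift (g ∘ₗ ι.restrictScalars ℂ) = shiftLift g ∘ₗ ι := by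
  ext x m
  simp

theorem shiftLift_proj_zero_comp (φ : N →ₗ[LaurentB n] ((Fin n → ℤ) → ℂ)) :
    shiftLift (LinearMap.proj 0 ∘ₗ φ.restrictScalars ℂ) = φ := by
  ext x m
  simp [single_smul_shift_apply]

end ShiftLift

theorem shiftModule_injective_module_general (n : ℕ)
    (M M' : Type*) [AddCommGroup M] [Module (LaurentB n) M]
    [AddCommGroup M'] [Module (LaurentB n) M']
    (ι : M →ₗ[LaurentB n] M') (hι : Function.Injective ι)
    (φ : M →ₗ[LaurentB n] ((Fin n → ℤ) → ℂ)) :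
    ∃ ψ : M' →ₗ[LaurentB n] ((Fin n → ℤ) → ℂ), ∀ x : M, ψ (ι x) = φ x := by
  let := Module.compHom M (algebraMap ℂ (LaurentB n))
  let := Module.compHom M' (algebraMap ℂ (LaurentB n))
  have : IsScalarTower ℂ (LaurentB n) M := .of_algebraMap_smul fun _ _ => rfl
  have : IsScalarTower ℂ (LaurentB n) M' := .of_algebraMap_smul fun _ _ => rfl
  obtain ⟨r, hr⟩ :=
    (ι.restrictScalars ℂ).exists_leftInverse_of_injective (LinearMap.ker_eq_bot.2 hι)
  refine ⟨shiftLift (LinearMap.proj 0 ∘ₗ φ.restrictScalars ℂ ∘ₗ r), fun x => ?_⟩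
  rw [← LinearMap.comp_apply, ← shiftLift_comp, LinearMap.comp_assoc, LinearMap.comp_assoc, hr,
    LinearMap.comp_id, shiftLift_proj_zero_comp]

/-- The `B`-module `ℂ^{ℤⁿ}` of all functions `ℤⁿ → ℂ`, with the Laurent polynomial ring `B`
acting by shifts, is an injective `B`-module: any homomorphism to `ℂ^{ℤⁿ}` extends along any
injective homomorphism. -/
theorem shiftModule_injective_module (n : ℕ) (hn : 0 < n)
    (M M' : Type*) [AddCommGroup M] [Module (LaurentB n) M]
    [AddCommGroup M'] [Module (LaurentB n) M']
    (ι : M →ₗ[LaurentB n] M') (hι : Function.Injective ι)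
    (φ : M →ₗ[LaurentB n] ((Fin n → ℤ) → ℂ)) :
    ∃ ψ : M' →ₗ[LaurentB n] ((Fin n → ℤ) → ℂ), ∀ x : M, ψ (ι x) = φ x :=
  shiftModule_injective_module_general n M M' ι hι φ
end
end

section
/- The B-module ℂ^{ℤⁿ} of all functions w : ℤⁿ → ℂ, with B = ℂ[σ₁,σ₁⁻¹,…,σₙ,σₙ⁻¹] acting by shifts, is a cogenerator: for every B-module M and every nonzero element m ∈ M, there exists a B-module homomorphism φ : M → ℂ^{ℤⁿ} with φ(m) ≠ 0; in particular, if Hom_B(M, ℂ^{ℤⁿ}) = 0 then M = 0. -/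
noncomputable section

/-!
The module `ℂ^{ℤⁿ}` is coinduced from the trivial module `ℂ`: a `B`-linear map `M → ℂ^{ℤⁿ}` is
the same as a `ℂ`-linear functional `f` on `M`, via `x ↦ (k ↦ f (σᵏ x))`. Since `M` is a
`ℂ`-vector space, some functional `f` does not vanish at `m ≠ 0`, and the corresponding
`B`-linear map takes the value `f m` at `0 ∈ ℤⁿ`.
-/

open AddMonoidAlgebra

namespace ShiftModule

theorem single_smul_shift_apply {n : ℕ} (μ : Fin n → ℤ) (c : ℂ) (w : (Fin n → ℤ) → ℂ)
    (k : Fin n → ℤ) : ((single μ c : LaurentB n) • w) k = c * w (k + μ) := by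
  change shiftAlgHom n (single μ c) w k = _
  rw [shiftAlgHom, lift_single]
  rfl

variable {n : ℕ} {M : Type*} [AddCommGroup M] [Module (LaurentB n) M] [Module ℂ M]
  [IsScalarTower ℂ (LaurentB n) M]

def coindDual (f : Module.Dual ℂ M) : M →ₗ[LaurentB n] ((Fin n → ℤ) → ℂ) where
  toFun x k := f ((single k 1 : LaurentB n) • x)
  map_add' x y := by
    funext k
    simp only [smul_add, map_add, Pi.add_apply]
  map_smul' b x := by
    induction b using AddMonoidAlgebra.induction_linear with
    | zero => funext k; simp
    | add p q hp hq =>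
      simp only [RingHom.id_apply] at hp hq ⊢
      rw [add_smul, add_smul, ← hp, ← hq]
      funext k
      simp only [smul_add, map_add, Pi.add_apply]
    | single μ c =>
      funext k
      have hsingle : (single (k + μ) c : LaurentB n) = c • single (k + μ) 1 := by
        rw [smul_single', mul_one]
      rw [RingHom.id_apply, single_smul_shift_apply, ← mul_smul, single_mul_single, one_mul,
        hsingle, smul_assoc, map_smul, smul_eq_mul]

theorem coindDual_apply_zero (f : Module.Dual ℂ M) (x : M) : coindDual (n := n) f x 0 = f x := by
  change f ((1 : LaurentB n) • x) = f x
  rw [one_smul]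

end ShiftModule

theorem shiftModule_cogenerator_general (n : ℕ)
    (M : Type*) [AddCommGroup M] [Module (LaurentB n) M]
    (m : M) (hm : m ≠ 0) :
    ∃ φ : M →ₗ[LaurentB n] ((Fin n → ℤ) → ℂ), φ m ≠ 0 := by
  let _ : Module ℂ M := Module.compHom M (algebraMap ℂ (LaurentB n))
  have : IsScalarTower ℂ (LaurentB n) M := IsScalarTower.of_algebraMap_smul fun _ _ => rfl
  obtain ⟨f, hf⟩ := Module.Projective.exists_dual_ne_zero ℂ hm
  refine ⟨ShiftModule.coindDual f, fun h => hf ?_⟩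
  rw [← ShiftModule.coindDual_apply_zero (n := n) f m, h, Pi.zero_apply]

/-- The `B`-module `ℂ^{ℤⁿ}` of all functions `ℤⁿ → ℂ`, with the Laurent polynomial ring `B`
acting by shifts, is a cogenerator: every nonzero element of any `B`-module is detected by
some homomorphism into `ℂ^{ℤⁿ}`. -/
theorem shiftModule_cogenerator (n : ℕ) (hn : 0 < n)
    (M : Type*) [AddCommGroup M] [Module (LaurentB n) M]
    (m : M) (hm : m ≠ 0) :
    ∃ φ : M →ₗ[LaurentB n] ((Fin n → ℤ) → ℂ), φ m ≠ 0 :=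
  shiftModule_cogenerator_general n M m hm
end
end
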